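/- Let V be a finite nonempty set and L : V × V → ℝ a Markov generator. For f : V → ℝ define T_L[f](x) := Σ_{y∈V} L(x,y)·(f(x) − f(y))₊, the relation x ⟶_f y (existence of an L-path from x to y along which f is non-increasing), and M(f) := { x̄ ∈ V : for every x ∈ V, x̄ ⟶_f x implies x ⟶_f x̄ }. If f, g : V → ℝ satisfy (i) T_L[f](x) = T_L[g](x) for all x ∈ V and (ii) f(x) = g(x) for all x ∈ M(f) ∪ M(g), then f = g. -/
import Mathlib

/-- In a finite type, from any point one can reach (via the reflexive-transitive
closure of any relation) a point that is minimal in the preorder sense. -/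
lemma exists_rtg_min {V : Type*} [Fintype V] (r : V → V → Prop) (x : V) :
    ∃ z, Relation.ReflTransGen r x z ∧
      ∀ w, Relation.ReflTransGen r z w → Relation.ReflTransGen r w z := by
  classical
  suffices H : ∀ n (x : V),
      (Finset.univ.filter (fun z => Relation.ReflTransGen r x z)).card ≤ n →
      ∃ z, Relation.ReflTransGen r x z ∧
        ∀ w, Relation.ReflTransGen r z w → Relation.ReflTransGen r w z by
    exact H _ x le_rfl
  intro n
  induction n with
  | zero =>
    intro x hx
    exfalso
    have : x ∈ Finset.univ.filter (fun z => Relation.ReflTransGen r x z) := by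
      simp [Relation.ReflTransGen.refl]
    have := Finset.card_pos.mpr ⟨x, this⟩
    omega
  | succ n ih =>
    intro x hx
    by_cases hmin : ∀ w, Relation.ReflTransGen r x w → Relation.ReflTransGen r w x
    · exact ⟨x, Relation.ReflTransGen.refl, hmin⟩
    · push_neg at hmin
      obtain ⟨w, hw, hnw⟩ := hmin
      have hsub : (Finset.univ.filter (fun z => Relation.ReflTransGen r w z)) ⊆
          (Finset.univ.filter (fun z => Relation.ReflTransGen r x z)) := by
        intro z hz
        simp only [Finset.mem_filter, Finset.mem_univ, true_and] at hz ⊢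
        exact hw.trans hz
      have hxmem : x ∈ Finset.univ.filter (fun z => Relation.ReflTransGen r x z) := by
        simp [Relation.ReflTransGen.refl]
      have hxnot : x ∉ Finset.univ.filter (fun z => Relation.ReflTransGen r w z) := by
        simp only [Finset.mem_filter, Finset.mem_univ, true_and]
        exact hnw
      have hcard : (Finset.univ.filter (fun z => Relation.ReflTransGen r w z)).card <
          (Finset.univ.filter (fun z => Relation.ReflTransGen r x z)).card :=
        Finset.card_lt_card ⟨hsub, fun h => hxnot (h hxmem)⟩
      obtain ⟨z, hz1, hz2⟩ := ih w (by omega)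
      exact ⟨z, hw.trans hz1, hz2⟩

/-- One-sided comparison: if `T_L[f] = T_L[g]` and `f = g` on the `g`-minimal
set, then `f ≤ g`. -/
lemma key_one_side {V : Type*} [Fintype V] [Nonempty V]
    (L : V → V → ℝ)
    (hL : ∀ x y, x ≠ y → 0 ≤ L x y)
    (f g : V → ℝ)
    (hT : ∀ x, ∑ y, L x y * max (f x - f y) 0 = ∑ y, L x y * max (g x - g y) 0)
    (hMg : ∀ x : V,
      (∀ z : V,
          Relation.ReflTransGen (fun a b => 0 < L a b ∧ g b ≤ g a) x z →
          Relation.ReflTransGen (fun a b => 0 < L a b ∧ g b ≤ g a) z x) →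
      f x = g x) :
    ∀ x, f x ≤ g x := by
  classical
  by_contra h
  push_neg at h
  obtain ⟨a, ha⟩ := h
  obtain ⟨x₀, -, hmax⟩ := Finset.exists_max_image Finset.univ (fun x => f x - g x)
    ⟨Classical.arbitrary V, Finset.mem_univ _⟩
  have hmax' : ∀ y : V, f y - g y ≤ f x₀ - g x₀ := fun y => hmax y (Finset.mem_univ y)
  have hm : 0 < f x₀ - g x₀ := lt_of_lt_of_le (by linarith) (hmax' a)
  -- termwise equality along positive-rate edges from a maximizer of f - g
  have claim1 : ∀ x, f x - g x = f x₀ - g x₀ → ∀ y, 0 < L x y →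
      max (f x - f y) 0 = max (g x - g y) 0 := by
    intro x hx y hy
    have hterm : ∀ y' ∈ Finset.univ,
        L x y' * max (g x - g y') 0 ≤ L x y' * max (f x - f y') 0 := by
      intro y' _
      rcases eq_or_ne y' x with rfl | hne
      · simp
      · have h1 : 0 ≤ L x y' := hL x y' hne.symm
        have h2 : g x - g y' ≤ f x - f y' := by
          have := hmax' y'; linarith
        exact mul_le_mul_of_nonneg_left (max_le_max h2 le_rfl) h1
    have heq := (Finset.sum_eq_sum_iff_of_le hterm).mp (hT x).symm y (Finset.mem_univ y)
    exact (mul_left_cancel₀ (ne_of_gt hy) heq).symm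
  -- g-descent edges from a maximizer stay in the maximizer set
  have claim2 : ∀ x y, f x - g x = f x₀ - g x₀ → 0 < L x y → g y ≤ g x →
      f y - g y = f x₀ - g x₀ := by
    intro x y hx hy hg
    have h1 := claim1 x hx y hy
    have h2 : f y - g y ≤ f x₀ - g x₀ := hmax' y
    by_contra hne
    have h3 : f y - g y < f x₀ - g x₀ := lt_of_le_of_ne h2 hne
    have h4 : g x - g y < f x - f y := by linarith
    have h5 : max (g x - g y) 0 = g x - g y := max_eq_left (by linarith)
    have h6 : max (f x - f y) 0 = f x - f y := max_eq_left (by linarith)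
    linarith
  -- hence g-descent paths from x₀ stay in the maximizer set
  have claim3 : ∀ z, Relation.ReflTransGen (fun a b => 0 < L a b ∧ g b ≤ g a) x₀ z →
      f z - g z = f x₀ - g x₀ := by
    intro z hz
    induction hz with
    | refl => rfl
    | tail hab hr ih => exact claim2 _ _ ih hr.1 hr.2
  obtain ⟨z, hz1, hz2⟩ := exists_rtg_min (fun a b => 0 < L a b ∧ g b ≤ g a) x₀
  have hfg := hMg z hz2
  have := claim3 z hz1
  linarith

/-- **Probabilistic determination on a finite state space.**
Let `L` be a Markov generator on a finite nonempty set `V` and set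
`T_L[h](x) = Σ_y L(x,y)(h(x)-h(y))₊`.  Write `x ⟶_h y` when there is an
`L`-path from `x` to `y` along which `h` is non-increasing, and let `M(h)`
be the set of `⟶_h`-minimal points.  If `T_L[f] = T_L[g]` pointwise and
`f = g` on `M(f) ∪ M(g)`, then `f = g`. -/
theorem finite_markov_determination
    {V : Type*} [Fintype V] [Nonempty V]
    (L : V → V → ℝ)
    (hL_offdiag : ∀ x y, x ≠ y → 0 ≤ L x y)
    (hL_rows : ∀ x, ∑ y, L x y = 0)
    (f g : V → ℝ)
    (hT : ∀ x, ∑ y, L x y * max (f x - f y) 0 = ∑ y, L x y * max (g x - g y) 0)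
    -- f = g on M(f) ∪ M(g)
    (hM : ∀ x : V,
      ((∀ z : V,
          Relation.ReflTransGen (fun a b => 0 < L a b ∧ f b ≤ f a) x z →
          Relation.ReflTransGen (fun a b => 0 < L a b ∧ f b ≤ f a) z x) ∨
       (∀ z : V,
          Relation.ReflTransGen (fun a b => 0 < L a b ∧ g b ≤ g a) x z →
          Relation.ReflTransGen (fun a b => 0 < L a b ∧ g b ≤ g a) z x)) →
      f x = g x) :
    ∀ x, f x = g x := by
  intro x
  have h1 := key_one_side L hL_offdiag f g hT (fun x h => hM x (Or.inr h))
  have h2 := key_one_side L hL_offdiag g f (fun x => (hT x).symm)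
    (fun x h => (hM x (Or.inl h)).symm)
  exact le_antisymm (h1 x) (h2 x)
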